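/- Let k > 0 with k ≠ 1, let γ > 0 and let α ∈ (0,2π) with α ≠ π. Then the Schur complement S = D·R(γα)·D⁻¹·R(2πγ) − R(γα) is the zero matrix if and only if γ is a positive integer and γα is an integer multiple of π. -/

import Mathlib

/-- The 2×2 rotation-type matrix `R(ω)` with rows `(cos ω, sin ω)` and `(−sin ω, cos ω)`. -/
noncomputable def rotMat (ω : ℝ) : Matrix (Fin 2) (Fin 2) ℝ :=
  !![Real.cos ω, Real.sin ω; -Real.sin ω, Real.cos ω]

/-- The diagonal matrix `D = diag(1, k)`. -/
def diagMat (k : ℝ) : Matrix (Fin 2) (Fin 2) ℝ := !![1, 0; 0, k]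

/-! `D R(a) D⁻¹` carries the entries `sin a / k` and `-k sin a` off the diagonal, so it can
only be a rotation if `sin a / k = k sin a`, which for `k² ≠ 1` forces `sin a = 0`; then
`R(a) = ±1` commutes with `D`. Writing `R(a) = R(a - b) R(b)`, the Schur complement vanishes
iff `D R(a) D⁻¹ = R(a - b)`, hence iff `sin a = 0` and `R(b) = 1`. -/

open Real

lemma rotMat_add (a b : ℝ) : rotMat (a + b) = rotMat a * rotMat b := by
  ext i j
  fin_cases i <;> fin_cases j <;>
    simp [rotMat, Matrix.mul_apply, cos_add, sin_add] <;> ring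

lemma rotMat_eq_one_iff (a : ℝ) : rotMat a = 1 ↔ ∃ n : ℤ, (n : ℝ) * (2 * π) = a := by
  rw [← cos_eq_one_iff]
  refine ⟨fun h => by simpa [rotMat] using congrFun (congrFun h 0) 0, fun h => ?_⟩
  have hsin : sin a = 0 := by nlinarith [sin_sq_add_cos_sq a]
  ext i j
  fin_cases i <;> fin_cases j <;> simp [rotMat, h, hsin]

lemma isUnit_rotMat (a : ℝ) : IsUnit (rotMat a) := by
  simp [Matrix.isUnit_iff_isUnit_det, rotMat, Matrix.det_fin_two, ← sq]

lemma inv_diagMat {k : ℝ} (hk : k ≠ 0) : (diagMat k)⁻¹ = diagMat k⁻¹ := by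
  refine Matrix.inv_eq_right_inv ?_
  ext i j
  fin_cases i <;> fin_cases j <;> simp [diagMat, hk]

lemma diagMat_mul_rotMat_mul_inv {k : ℝ} (hk : k ≠ 0) (a : ℝ) :
    diagMat k * rotMat a * (diagMat k)⁻¹ = !![cos a, sin a / k; -(k * sin a), cos a] := by
  rw [inv_diagMat hk]
  ext i j
  fin_cases i <;> fin_cases j <;> simp [diagMat, rotMat, div_eq_mul_inv, hk, mul_comm k]

lemma diagMat_mul_rotMat_mul_inv_eq_rotMat_iff {k : ℝ} (hk : k ≠ 0) (hk2 : k ^ 2 ≠ 1)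
    (a θ : ℝ) :
    diagMat k * rotMat a * (diagMat k)⁻¹ = rotMat θ ↔ sin a = 0 ∧ rotMat a = rotMat θ := by
  have hconj := diagMat_mul_rotMat_mul_inv hk a
  constructor
  · intro h
    rw [hconj] at h
    have h01 : sin a / k = sin θ := by simpa [rotMat] using congrFun (congrFun h 0) 1
    have h10 : k * sin a = sin θ := by simpa [rotMat] using congrFun (congrFun h 1) 0
    have hsin : sin a = 0 := by
      have : sin a * (k ^ 2 - 1) = 0 := by
        field_simp at h01
        linear_combination k * h10 - h01
      exact (mul_eq_zero.mp this).resolve_right (sub_ne_zero.mpr hk2)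
    refine ⟨hsin, h ▸ ?_⟩
    ext i j
    fin_cases i <;> fin_cases j <;> simp [rotMat, hsin]
  · rintro ⟨hsin, h⟩
    rw [← h, hconj]
    ext i j
    fin_cases i <;> fin_cases j <;> simp [rotMat, hsin]

lemma schurComplement_eq_zero_iff_of_sq_ne_one {k : ℝ} (hk : k ≠ 0) (hk2 : k ^ 2 ≠ 1)
    (a b : ℝ) :
    diagMat k * rotMat a * (diagMat k)⁻¹ * rotMat b - rotMat a = 0 ↔
      sin a = 0 ∧ rotMat b = 1 := by
  have hsplit : rotMat a = rotMat (a - b) * rotMat b := by rw [← rotMat_add, sub_add_cancel]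
  calc _ ↔ diagMat k * rotMat a * (diagMat k)⁻¹ * rotMat b = rotMat (a - b) * rotMat b := by
        rw [sub_eq_zero, ← hsplit]
    _ ↔ diagMat k * rotMat a * (diagMat k)⁻¹ = rotMat (a - b) := (isUnit_rotMat b).mul_left_inj
    _ ↔ sin a = 0 ∧ rotMat (a - b) * rotMat b = rotMat (a - b) := by
        rw [diagMat_mul_rotMat_mul_inv_eq_rotMat_iff hk hk2, hsplit]
    _ ↔ sin a = 0 ∧ rotMat b = 1 := by rw [(isUnit_rotMat (a - b)).mul_eq_left]

theorem schurComplement_eq_zero_iff_general (k γ α : ℝ) (hk : 0 < k) (hk1 : k ≠ 1)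
    (hγ : 0 < γ) :
    diagMat k * rotMat (γ * α) * (diagMat k)⁻¹ * rotMat (2 * Real.pi * γ)
        - rotMat (γ * α) = 0 ↔
      (∃ n : ℕ, 0 < n ∧ γ = (n : ℝ)) ∧ (∃ m : ℤ, γ * α = (m : ℝ) * Real.pi) := by
  have hk2 : k ^ 2 ≠ 1 := (pow_eq_one_iff_of_nonneg hk.le two_ne_zero).not.mpr hk1
  have hγ_nat : (∃ n : ℤ, (n : ℝ) * (2 * π) = 2 * π * γ) ↔ ∃ n : ℕ, 0 < n ∧ γ = (n : ℝ) := by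
    constructor
    · rintro ⟨n, hn⟩
      have hγn : γ = n := by nlinarith [pi_pos]
      lift n to ℕ using (by exact_mod_cast (hγn ▸ hγ).le)
      exact ⟨n, by exact_mod_cast hγn ▸ hγ, by exact_mod_cast hγn⟩
    · rintro ⟨n, -, rfl⟩
      exact ⟨n, by push_cast; ring⟩
  rw [schurComplement_eq_zero_iff_of_sq_ne_one hk.ne' hk2, sin_eq_zero_iff, rotMat_eq_one_iff,
    and_comm, hγ_nat]
  exact and_congr_right fun _ => exists_congr fun _ => eq_comm

/-- for `k > 0`, `k ≠ 1`, `γ > 0`, `α ∈ (0,2π) ∖ {π}`, the Schur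
complement `S = D·R(γα)·D⁻¹·R(2πγ) − R(γα)` vanishes identically iff `γ` is a
positive integer and `γα` is an integer multiple of `π`. -/
theorem schurComplement_eq_zero_iff (k γ α : ℝ) (hk : 0 < k) (hk1 : k ≠ 1)
    (hγ : 0 < γ) (hα0 : 0 < α) (hα2 : α < 2 * Real.pi) (hαπ : α ≠ Real.pi) :
    diagMat k * rotMat (γ * α) * (diagMat k)⁻¹ * rotMat (2 * Real.pi * γ)
        - rotMat (γ * α) = 0 ↔
      (∃ n : ℕ, 0 < n ∧ γ = (n : ℝ)) ∧ (∃ m : ℤ, γ * α = (m : ℝ) * Real.pi) :=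
  schurComplement_eq_zero_iff_general k γ α hk hk1 hγ
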